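/- (Inequality (2.9), algebraic form.) Let α > 0. Suppose Q̊(ψ) ≥ 0 for every traceless symmetric bilinear form ψ on E, and Ric(X,X) ≥ (n−1) α ‖X‖² for every X ∈ E. Then for every p ≥ 2 and every totally traceless symmetric p-multilinear map φ : E^p → ℝ, the Weitzenböck quadratic form satisfies Q_p(φ) ≥ p(n−1) α ‖φ‖² ≥ 0. -/
import Mathlib


open scoped RealInnerProductSpace

section Aux

private theorem rot3' {ι₁ ι₂ ι₃ : Type*} [Fintype ι₁] [Fintype ι₂] [Fintype ι₃]
    (F : ι₁ → ι₂ → ι₃ → ℝ) :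
    (∑ i, ∑ j, ∑ k, F i j k) = ∑ k, ∑ i, ∑ j, F i j k := by
  simp_rw [Finset.sum_comm (f := fun j k => F _ j k)]
  exact Finset.sum_comm

private theorem rot4' {ι₁ ι₂ ι₃ ι₄ : Type*} [Fintype ι₁] [Fintype ι₂] [Fintype ι₃] [Fintype ι₄]
    (F : ι₁ → ι₂ → ι₃ → ι₄ → ℝ) :
    (∑ i, ∑ j, ∑ k, ∑ l, F i j k l) = ∑ l, ∑ i, ∑ j, ∑ k, F i j k l :=
  calc (∑ i, ∑ j, ∑ k, ∑ l, F i j k l)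
      = ∑ i, ∑ l, ∑ j, ∑ k, F i j k l :=
        Finset.sum_congr rfl fun i _ => rot3' (F i)
    _ = ∑ l, ∑ i, ∑ j, ∑ k, F i j k l := Finset.sum_comm

private theorem rot5' {ι₁ ι₂ ι₃ ι₄ ι₅ : Type*}
    [Fintype ι₁] [Fintype ι₂] [Fintype ι₃] [Fintype ι₄] [Fintype ι₅]
    (F : ι₁ → ι₂ → ι₃ → ι₄ → ι₅ → ℝ) :
    (∑ i, ∑ j, ∑ k, ∑ l, ∑ m, F i j k l m) = ∑ m, ∑ i, ∑ j, ∑ k, ∑ l, F i j k l m :=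
  calc (∑ i, ∑ j, ∑ k, ∑ l, ∑ m, F i j k l m)
      = ∑ i, ∑ m, ∑ j, ∑ k, ∑ l, F i j k l m :=
        Finset.sum_congr rfl fun i _ => rot4' (F i)
    _ = ∑ m, ∑ i, ∑ j, ∑ k, ∑ l, F i j k l m := Finset.sum_comm

private def quadEquiv (n : ℕ) : (Fin n × Fin n × Fin n × Fin n) ≃ (Fin n × Fin n × Fin n × Fin n)
    where
  toFun q := (q.2.1, q.2.2.2, q.1, q.2.2.1)
  invFun q := (q.2.2.1, q.1, q.2.2.2, q.2.1)
  left_inv := by rintro ⟨a, b, c, d⟩; rfl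
  right_inv := by rintro ⟨a, b, c, d⟩; rfl

private theorem sum4_flat {n : ℕ} (F : Fin n → Fin n → Fin n → Fin n → ℝ) :
    (∑ i, ∑ j, ∑ k, ∑ l, F i j k l)
      = ∑ q : Fin n × Fin n × Fin n × Fin n, F q.1 q.2.1 q.2.2.1 q.2.2.2 := by
  simp [Fintype.sum_prod_type]

/-- key curvature reindexing -/
private theorem sum4_reindex {n : ℕ} (Rf : Fin n → Fin n → Fin n → Fin n → ℝ)
    (a : Fin n → Fin n → ℝ) (hR1 : ∀ i j k l, Rf i j k l = - Rf j i k l) :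
    (∑ i, ∑ j, ∑ k, ∑ l, Rf i j k l * a i k * a j l)
      = - ∑ i, ∑ j, ∑ k, ∑ l, Rf i k l j * a k l * a i j := by
  rw [sum4_flat, sum4_flat, ← Finset.sum_neg_distrib]
  refine Fintype.sum_equiv (quadEquiv n) _ _ ?_
  rintro ⟨i, j, k, l⟩
  simp only [quadEquiv, Equiv.coe_fn_mk]
  rw [hR1 i j k l]
  ring

/-- composing with swap 0 1 swaps the first two entries of a double cons -/
private theorem comp_swap01 {p : ℕ} {E : Type*} (X Y : E) (w : Fin p → E) :
    (Fin.cons Y (Fin.cons X w) : Fin (p + 2) → E) ∘ (Equiv.swap 0 1)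
      = Fin.cons X (Fin.cons Y w) := by
  funext i
  refine Fin.cases ?_ (fun j => Fin.cases ?_ (fun m => ?_) j) i
  · simp [Equiv.swap_apply_left]
  · have h1 : (Fin.succ 0 : Fin (p + 2)) = 1 := rfl
    simp [h1, Equiv.swap_apply_right]
  · have h0 : (Fin.succ (Fin.succ m) : Fin (p + 2)) ≠ 0 := Fin.succ_ne_zero _
    have h1 : (Fin.succ (Fin.succ m) : Fin (p + 2)) ≠ 1 := by
      have h : (1 : Fin (p + 2)) = Fin.succ 0 := rfl
      rw [h]
      exact fun h' => Fin.succ_ne_zero m (Fin.succ_injective _ h')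
    simp [Function.comp, Equiv.swap_apply_of_ne_of_ne h0 h1]

private theorem ric_expand {E : Type*} [NormedAddCommGroup E] [InnerProductSpace ℝ E]
    {n : ℕ} (e : OrthonormalBasis (Fin n) ℝ E)
    (R : E →ₗ[ℝ] E →ₗ[ℝ] E →ₗ[ℝ] E →ₗ[ℝ] ℝ) (a : Fin n → ℝ) :
    (∑ m, R (e m) (∑ i, a i • e i) (e m) (∑ i, a i • e i)) =
      ∑ i, ∑ j, (∑ m, R (e m) (e i) (e m) (e j)) * a i * a j := by
  rw [show (∑ i, ∑ j, (∑ m, R (e m) (e i) (e m) (e j)) * a i * a j)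
      = ∑ j, ∑ i, (∑ m, R (e m) (e i) (e m) (e j)) * a i * a j from Finset.sum_comm]
  simp only [map_sum, map_smul, LinearMap.sum_apply, LinearMap.smul_apply, smul_eq_mul,
    Finset.mul_sum, Finset.sum_mul]
  rw [Finset.sum_comm]
  refine Finset.sum_congr rfl fun i _ => ?_
  rw [Finset.sum_comm]
  refine Finset.sum_congr rfl fun j _ => Finset.sum_congr rfl fun m _ => by ring

private theorem norm_sq_sum {E : Type*} [NormedAddCommGroup E] [InnerProductSpace ℝ E]
    {n : ℕ} (e : OrthonormalBasis (Fin n) ℝ E) (a : Fin n → ℝ) :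
    ‖∑ i, a i • e i‖ ^ 2 = ∑ i, (a i) ^ 2 := by
  rw [← real_inner_self_eq_norm_sq]
  have h := e.orthonormal.inner_sum a a Finset.univ
  simp only [starRingEnd_apply, star_trivial] at h
  rw [h]
  exact Finset.sum_congr rfl fun i _ => (sq (a i)).symm

end Aux

/-- The Weitzenböck quadratic form `Q_p` on symmetric `p`-multilinear maps (with
`p = p' + 2 ≥ 2`):
`Q_p(φ) = p Σ Ric(e_i,e_j) φ(e_i,e_{k₂},…) φ(e_j,e_{k₂},…)
  − p(p−1) Σ R(e_i,e_j,e_k,e_l) φ(e_i,e_k,e_{k₃},…) φ(e_j,e_l,e_{k₃},…)`,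
where `Ric(X,Y) = Σ_m R(e_m,X,e_m,Y)`. -/
noncomputable def weitzenbockQ
    {E : Type*} [NormedAddCommGroup E] [InnerProductSpace ℝ E]
    {n : ℕ} (e : OrthonormalBasis (Fin n) ℝ E)
    (R : E →ₗ[ℝ] E →ₗ[ℝ] E →ₗ[ℝ] E →ₗ[ℝ] ℝ)
    (p : ℕ) (φ : MultilinearMap ℝ (fun _ : Fin (p + 2) => E) ℝ) : ℝ :=
  ((p : ℝ) + 2) *
      (∑ i, ∑ j, ∑ ks : Fin (p + 1) → Fin n,
        (∑ m, R (e m) (e i) (e m) (e j)) *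
          φ (Fin.cons (e i) (fun m => e (ks m))) *
          φ (Fin.cons (e j) (fun m => e (ks m))))
    - ((p : ℝ) + 2) * (((p : ℝ) + 2) - 1) *
      (∑ i, ∑ j, ∑ k, ∑ l, ∑ ks : Fin p → Fin n,
        R (e i) (e j) (e k) (e l) *
          φ (Fin.cons (e i) (Fin.cons (e k) (fun m => e (ks m)))) *
          φ (Fin.cons (e j) (Fin.cons (e l) (fun m => e (ks m)))))

/-- **inequality (2.9), algebraic form.** Let `α > 0`.  If
`Q̊(ψ) ≥ 0` for every traceless symmetric bilinear form `ψ` and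
`Ric(X,X) ≥ (n−1) α ‖X‖²` for every `X`, then for every `p ≥ 2` (written `p + 2`)
and every totally traceless symmetric `p`-multilinear map `φ`,
`Q_p(φ) ≥ p(n−1) α ‖φ‖² ≥ 0`. -/
theorem stmt_13
    {E : Type*} [NormedAddCommGroup E] [InnerProductSpace ℝ E]
    {n : ℕ} (hn : 2 ≤ n) (e : OrthonormalBasis (Fin n) ℝ E)
    (R : E →ₗ[ℝ] E →ₗ[ℝ] E →ₗ[ℝ] E →ₗ[ℝ] ℝ)
    (hR1 : ∀ X Y Z W : E, R X Y Z W = - R Y X Z W)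
    (hR2 : ∀ X Y Z W : E, R X Y Z W = - R X Y W Z)
    (hR3 : ∀ X Y Z W : E, R X Y Z W = R Z W X Y)
    (hR4 : ∀ X Y Z W : E, R X Y Z W + R Y Z X W + R Z X Y W = 0)
    (α : ℝ) (hα : 0 < α)
    (hQ : ∀ ψ : E →ₗ[ℝ] E →ₗ[ℝ] ℝ, (∀ X Y : E, ψ X Y = ψ Y X) →
      (∑ i, ψ (e i) (e i)) = 0 →
      0 ≤ ∑ i, ∑ j, ∑ k, ∑ l, R (e i) (e k) (e l) (e j) * ψ (e k) (e l) * ψ (e i) (e j))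
    (hRic : ∀ X : E, ((n : ℝ) - 1) * α * ‖X‖ ^ 2 ≤ ∑ m, R (e m) X (e m) X)
    (p : ℕ)
    (φ : MultilinearMap ℝ (fun _ : Fin (p + 2) => E) ℝ)
    (hφsymm : ∀ σ : Equiv.Perm (Fin (p + 2)), ∀ v : Fin (p + 2) → E, φ (v ∘ σ) = φ v)
    (hφtr : ∀ v : Fin p → E, (∑ i, φ (Fin.cons (e i) (Fin.cons (e i) v))) = 0) :
    0 ≤ ((p : ℝ) + 2) * ((n : ℝ) - 1) * α *
        (∑ t : Fin (p + 2) → Fin n, (φ (fun m => e (t m))) ^ 2) ∧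
    ((p : ℝ) + 2) * ((n : ℝ) - 1) * α *
        (∑ t : Fin (p + 2) → Fin n, (φ (fun m => e (t m))) ^ 2) ≤
      weitzenbockQ e R p φ := by
  -- basic positivity facts
  have hn1 : (1 : ℝ) ≤ (n : ℝ) - 1 := by
    have : (2 : ℝ) ≤ (n : ℝ) := by exact_mod_cast hn
    linarith
  have hn0 : (0 : ℝ) ≤ (n : ℝ) - 1 := by linarith
  have hp0 : (0 : ℝ) ≤ (p : ℝ) + 2 := by positivity
  -- names for the three big sums
  set S : ℝ := ∑ t : Fin (p + 2) → Fin n, (φ (fun m => e (t m))) ^ 2 with hS_def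
  have hS0 : 0 ≤ S := Finset.sum_nonneg fun _ _ => sq_nonneg _
  -- first conjunct
  refine ⟨by positivity, ?_⟩
  -- the coefficient map `a`
  set a : (Fin (p + 1) → Fin n) → Fin n → ℝ :=
    fun ks i => φ (Fin.cons (e i) (fun m => e (ks m))) with ha_def
  -- split of ‖φ‖² along the first index
  have hsplit : S = ∑ ks : Fin (p + 1) → Fin n, ∑ i, (a ks i) ^ 2 := by
    rw [hS_def, ← (Fin.consEquiv (fun _ : Fin (p + 2) => Fin n)).sum_comp, Fintype.sum_prod_type]
    rw [Finset.sum_comm]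
    refine Finset.sum_congr rfl fun ks _ => Finset.sum_congr rfl fun i _ => ?_
    congr 2
    exact funext fun m => m.cases rfl (fun _ => rfl)
  -- symmetry in the first two slots
  have swap01 : ∀ (X Y : E) (w : Fin p → E),
      φ (Fin.cons X (Fin.cons Y w)) = φ (Fin.cons Y (Fin.cons X w)) := by
    intro X Y w
    have h := hφsymm (Equiv.swap 0 1) (Fin.cons Y (Fin.cons X w))
    rw [← h, comp_swap01]
  -- the Ricci term A
  set A : ℝ := ∑ i, ∑ j, ∑ ks : Fin (p + 1) → Fin n,
      (∑ m, R (e m) (e i) (e m) (e j)) *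
        φ (Fin.cons (e i) (fun m => e (ks m))) *
        φ (Fin.cons (e j) (fun m => e (ks m))) with hA_def
  -- the curvature term B
  set B : ℝ := ∑ i, ∑ j, ∑ k, ∑ l, ∑ ks : Fin p → Fin n,
      R (e i) (e j) (e k) (e l) *
        φ (Fin.cons (e i) (Fin.cons (e k) (fun m => e (ks m)))) *
        φ (Fin.cons (e j) (Fin.cons (e l) (fun m => e (ks m)))) with hB_def
  -- lower bound on A
  have hA : ((n : ℝ) - 1) * α * S ≤ A := by
    have hArot : A = ∑ ks : Fin (p + 1) → Fin n, ∑ i, ∑ j,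
        (∑ m, R (e m) (e i) (e m) (e j)) * a ks i * a ks j := by
      rw [hA_def]
      exact rot3' _
    rw [hArot, hsplit, Finset.mul_sum]
    refine Finset.sum_le_sum fun ks _ => ?_
    have hexp := ric_expand e R (a ks)
    have hnorm := norm_sq_sum e (a ks)
    have h := hRic (∑ i, a ks i • e i)
    rw [hexp, hnorm] at h
    exact h
  -- upper bound on B
  have hB : B ≤ 0 := by
    have hBrot : B = ∑ ks : Fin p → Fin n, ∑ i, ∑ j, ∑ k, ∑ l,
        R (e i) (e j) (e k) (e l) *
          φ (Fin.cons (e i) (Fin.cons (e k) (fun m => e (ks m)))) *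
          φ (Fin.cons (e j) (Fin.cons (e l) (fun m => e (ks m)))) := by
      rw [hB_def]
      exact rot5' _
    rw [hBrot]
    refine Finset.sum_nonpos fun ks _ => ?_
    -- build the bilinear form ψ
    set v : Fin p → E := fun m => e (ks m) with hv_def
    set ψ : E →ₗ[ℝ] E →ₗ[ℝ] ℝ := LinearMap.mk₂ ℝ
      (fun X Y => φ (Fin.cons X (Fin.cons Y v)))
      (fun X X' Y => φ.cons_add (Fin.cons Y v) X X')
      (fun c X Y => φ.cons_smul (Fin.cons Y v) c X)
      (fun X Y Y' => by
        beta_reduce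
        rw [swap01 X (Y + Y') v, φ.cons_add (Fin.cons X v) Y Y',
          swap01 Y X v, swap01 Y' X v])
      (fun c X Y => by
        beta_reduce
        rw [swap01 X (c • Y) v, φ.cons_smul (Fin.cons X v) c Y, swap01 Y X v]) with hψ_def
    have hψapp : ∀ X Y : E, ψ X Y = φ (Fin.cons X (Fin.cons Y v)) := fun X Y => rfl
    have hψsymm : ∀ X Y : E, ψ X Y = ψ Y X := by
      intro X Y; rw [hψapp, hψapp]; exact swap01 X Y v
    have hψtr : (∑ i, ψ (e i) (e i)) = 0 := by
      simp only [hψapp]; exact hφtr v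
    have hQψ := hQ ψ hψsymm hψtr
    simp only [hψapp] at hQψ
    have hre := sum4_reindex (fun i j k l => R (e i) (e j) (e k) (e l))
      (fun i k => φ (Fin.cons (e i) (Fin.cons (e k) v)))
      (fun i j k l => hR1 (e i) (e j) (e k) (e l))
    rw [hre]
    linarith
  -- assemble
  have hA' : ((p : ℝ) + 2) * (((n : ℝ) - 1) * α * S) ≤ ((p : ℝ) + 2) * A :=
    mul_le_mul_of_nonneg_left hA hp0
  have hc0 : (0 : ℝ) ≤ ((p : ℝ) + 2) * (((p : ℝ) + 2) - 1) := by nlinarith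
  have hB' : ((p : ℝ) + 2) * (((p : ℝ) + 2) - 1) * B ≤ 0 :=
    mul_nonpos_of_nonneg_of_nonpos hc0 hB
  have hQform : weitzenbockQ e R p φ
      = ((p : ℝ) + 2) * A - ((p : ℝ) + 2) * (((p : ℝ) + 2) - 1) * B := by
    rw [weitzenbockQ, hA_def, hB_def]
  rw [hQform]
  nlinarith [hA', hB']
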